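/- arXiv:2108.06059 — 2 statements merged into one kernel-verified Lean document; each statement's English description precedes it below -/
import Mathlib

section
/- Let 𝒬 be the rational comb with its path metric and basepoint b = (0,0). Then the horofunction map ψ : 𝒬 → Lip^1_b(𝒬), z ↦ ψ_z, is not a homeomorphism onto its image: there exist a point q ∈ 𝒬 and a sequence q_n ∈ 𝒬 such that ψ_{q_n}(x) → ψ_q(x) for every x ∈ 𝒬, while q_n does not converge to q in 𝒬. -/
open Filter Topology

/-- The rational comb `𝒬 = (ℝ × {0}) ∪ (ℚ × ℝ) ⊆ ℝ²`: a point is on the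
horizontal spine (second coordinate zero) or on a vertical tooth over a
rational number. -/
@[ext]
structure Comb where
  pt : ℝ × ℝ
  mem : pt.2 = 0 ∨ ∃ q : ℚ, (q : ℝ) = pt.1

/-- The inclusion `ι : 𝒬 → ℝ²`. -/
def Comb.ι (x : Comb) : ℝ × ℝ := x.pt

/-- The path metric of the comb:
`d((a,s),(c,t)) = |s − t|` if `a = c`, and `|s| + |a − c| + |t|` otherwise. -/
noncomputable def combDist (x y : Comb) : ℝ :=
  if x.pt.1 = y.pt.1 then |x.pt.2 - y.pt.2|
  else |x.pt.2| + |x.pt.1 - y.pt.1| + |y.pt.2|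

noncomputable instance : MetricSpace Comb where
  dist := combDist
  dist_self x := by
    show combDist x x = 0
    simp [combDist]
  dist_comm x y := by
    show combDist x y = combDist y x
    unfold combDist
    rcases eq_or_ne x.pt.1 y.pt.1 with h | h
    · rw [if_pos h, if_pos h.symm, abs_sub_comm]
    · rw [if_neg h, if_neg (Ne.symm h), abs_sub_comm]
      ring
  dist_triangle x y z := by
    show combDist x z ≤ combDist x y + combDist y z
    unfold combDist
    obtain ⟨⟨a, s⟩, _⟩ := x
    obtain ⟨⟨c, t⟩, _⟩ := y
    obtain ⟨⟨e, u⟩, _⟩ := z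
    simp only
    have hsu : |s - u| ≤ |s| + |u| := by
      simpa [sub_eq_add_neg] using abs_add_le s (-u)
    have hst : |s - t| ≤ |s| + |t| := by
      simpa [sub_eq_add_neg] using abs_add_le s (-t)
    have htu : |t - u| ≤ |t| + |u| := by
      simpa [sub_eq_add_neg] using abs_add_le t (-u)
    have hs' : |s| - |t| ≤ |s - t| := abs_sub_abs_le_abs_sub s t
    have hu' : |u| - |t| ≤ |t - u| := by
      rw [abs_sub_comm]; exact abs_sub_abs_le_abs_sub u t
    by_cases h2 : a = c
    · subst h2
      by_cases h1 : a = e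
      · subst h1
        simp only [if_pos rfl]
        exact abs_sub_le s t u
      · rw [if_neg h1, if_pos rfl, if_neg h1]
        linarith
    · by_cases h3 : c = e
      · subst h3
        rw [if_neg h2, if_neg h2, if_pos rfl]
        linarith
      · by_cases h1 : a = e
        · subst h1
          rw [if_pos rfl, if_neg h2, if_neg h3]
          have := abs_nonneg (a - c)
          have := abs_nonneg (c - a)
          have := abs_nonneg t
          linarith [abs_sub_le s t u, htu]
        · rw [if_neg h1, if_neg h2, if_neg h3]
          have := abs_sub_le a c e
          have := abs_nonneg t
          linarith
  eq_of_dist_eq_zero := by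
    intro x y h
    have h : combDist x y = 0 := h
    unfold combDist at h
    rcases eq_or_ne x.pt.1 y.pt.1 with h1 | h1
    · rw [if_pos h1] at h
      have h2 : x.pt.2 = y.pt.2 := by
        have := abs_eq_zero.mp h
        linarith
      ext
      · exact h1
      · exact h2
    · rw [if_neg h1] at h
      exfalso
      have hpos : 0 < |x.pt.1 - y.pt.1| := abs_pos.mpr (sub_ne_zero.mpr h1)
      have := abs_nonneg x.pt.2
      have := abs_nonneg y.pt.2
      linarith

/-- The basepoint `b = (0,0)` of the comb. -/
def combBase : Comb := ⟨(0, 0), Or.inl rfl⟩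

/-- The horofunction at `z` with basepoint `b`: `ψ_z(x) = d(x,z) - d(b,z)`. -/
noncomputable def horo {X : Type*} [MetricSpace X] (b z : X) : X → ℝ :=
  fun x => dist x z - dist b z

/-- The set of `C`-Lipschitz real-valued functions vanishing at the
basepoint `b`, with the topology of pointwise convergence. -/
def LipB {X : Type*} [MetricSpace X] (b : X) (C : ℝ) : Set (X → ℝ) :=
  {f | (∀ x y : X, |f x - f y| ≤ C * dist x y) ∧ f b = 0}

/-!
Take the teeth points `(1/(n+1), 1)`. They stay at distance at least `1` from the basepoint, so
they do not converge to it. But from any fixed `x` off these teeth, the path to `(q, 1)` runs down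
to the spine, along it to `q` and up the tooth, as does the path from the basepoint; the common
final climb of height `1` cancels in `ψ_{(q,1)}(x)`, which is therefore `|x₂| + |x₁ - q| - |q|`.
As `q → 0` this tends to `|x₂| + |x₁| = ψ_b(x)`. An embedding `ψ` would turn this pointwise
convergence back into convergence in `𝒬`.
-/

theorem tendsto_of_isInducing_horo {X : Type*} [MetricSpace X] {b : X} {C : ℝ}
    {Ψ : X → LipB b C} (hΨ : ∀ z, (Ψ z : X → ℝ) = horo b z) (hΨind : IsInducing Ψ)
    {ι : Type*} {l : Filter ι} {z : ι → X} {q : X}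
    (h : ∀ x, Tendsto (fun n => horo b (z n) x) l (𝓝 (horo b q x))) :
    Tendsto z l (𝓝 q) := by
  rw [hΨind.tendsto_nhds_iff, tendsto_subtype_rng, tendsto_pi_nhds]
  simpa only [Function.comp_def, hΨ] using h

namespace Comb

lemma dist_of_fst_ne {x y : Comb} (h : x.pt.1 ≠ y.pt.1) :
    dist x y = |x.pt.2| + |x.pt.1 - y.pt.1| + |y.pt.2| :=
  if_neg h

lemma dist_combBase (x : Comb) : dist x combBase = |x.pt.2| + |x.pt.1| := by
  by_cases hx : x.pt.1 = 0
  · rw [dist_comm]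
    show combDist combBase x = _
    simp [combDist, combBase, hx]
  · rw [dist_of_fst_ne hx]
    simp [combBase]

def tooth (q : ℚ) (t : ℝ) : Comb := ⟨(q, t), Or.inr ⟨q, rfl⟩⟩

lemma horo_combBase_combBase (x : Comb) : horo combBase combBase x = |x.pt.2| + |x.pt.1| := by
  simp [horo, dist_combBase]

lemma horo_combBase_tooth {q : ℚ} (hq : q ≠ 0) (t : ℝ) {x : Comb} (hx : x.pt.1 ≠ q) :
    horo combBase (tooth q t) x = |x.pt.2| + |x.pt.1 - q| - |(q : ℝ)| := by
  have hbq : combBase.pt.1 ≠ (tooth q t).pt.1 := by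
    simp only [combBase, tooth]
    exact_mod_cast hq.symm
  rw [horo, dist_of_fst_ne hx, dist_of_fst_ne hbq]
  simp only [tooth, combBase, abs_zero, zero_sub, abs_neg]
  ring

lemma tendsto_horo_tooth {q : ℕ → ℚ} (hq0 : ∀ n, q n ≠ 0)
    (hq : Tendsto (fun n => (q n : ℝ)) atTop (𝓝 0)) (t : ℝ) (x : Comb) :
    Tendsto (fun n => horo combBase (tooth (q n) t) x) atTop
      (𝓝 (horo combBase combBase x)) := by
  have hx_off : ∀ᶠ n in atTop, x.pt.1 ≠ q n := by
    by_cases hx : x.pt.1 = 0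
    · exact Eventually.of_forall fun n => by rw [hx]; exact_mod_cast (hq0 n).symm
    · exact (hq.eventually_ne (Ne.symm hx)).mono fun n hn => Ne.symm hn
  have hlim : Tendsto (fun n => |x.pt.2| + |x.pt.1 - q n| - |(q n : ℝ)|) atTop
      (𝓝 (|x.pt.2| + |x.pt.1 - 0| - |0|)) :=
    (tendsto_const_nhds.add (tendsto_const_nhds.sub hq).abs).sub hq.abs
  rw [horo_combBase_combBase]
  simp only [sub_zero, abs_zero] at hlim
  refine hlim.congr' ?_
  filter_upwards [hx_off] with n hn
  exact (horo_combBase_tooth (hq0 n) t hn).symm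

lemma not_tendsto_tooth_combBase (q : ℕ → ℚ) {t : ℝ} (ht : t ≠ 0) :
    ¬ Tendsto (fun n => tooth (q n) t) atTop (𝓝 combBase) := by
  intro h
  obtain ⟨n, hn⟩ := Metric.tendsto_atTop.mp h |t| (abs_pos.mpr ht)
  specialize hn n le_rfl
  rw [dist_combBase] at hn
  simp only [tooth] at hn
  linarith [abs_nonneg (q n : ℝ)]

end Comb

/-- On the rational comb `𝒬` with basepoint `b = (0,0)`, the horofunction map
`ψ : 𝒬 → Lip¹_b(𝒬)` is not a homeomorphism onto its image: there are a point
`q` and a sequence `q_n` in `𝒬` with `ψ_{q_n} → ψ_q` pointwise while `q_n`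
does not converge to `q` in `𝒬`. -/
theorem stmt7 :
    (¬ ∃ Ψ : Comb → (LipB combBase 1 : Set (Comb → ℝ)),
        (∀ z : Comb, (Ψ z : Comb → ℝ) = horo combBase z) ∧
        Topology.IsEmbedding Ψ) ∧
    ∃ (q : Comb) (qn : ℕ → Comb),
      (∀ x : Comb,
        Tendsto (fun n => horo combBase (qn n) x) atTop (𝓝 (horo combBase q x))) ∧
      ¬ Tendsto qn atTop (𝓝 q) := by
  have hpointwise := Comb.tendsto_horo_tooth (q := fun n : ℕ => 1 / (n + 1)) (fun n => by positivity)
    (by push_cast; exact tendsto_one_div_add_atTop_nhds_zero_nat) 1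
  have hnot := Comb.not_tendsto_tooth_combBase (fun n : ℕ => 1 / (n + 1)) one_ne_zero
  refine ⟨?_, combBase, _, hpointwise, hnot⟩
  rintro ⟨Ψ, hΨ, hΨemb⟩
  exact hnot (tendsto_of_isInducing_horo hΨ hΨemb.isInducing hpointwise)
end

section
/- Let 𝒬 be the rational comb with its path metric, basepoint b = (0,0), and inclusion ι : 𝒬 → ℝ². Then the map Ψ : 𝒬 → Π_{x∈𝒬} (ℝ × ℝ²) defined by Ψ(z) := (ψ_z(x), dir_z(x))_{x∈𝒬}, where the target carries the product topology, is a homeomorphism onto its image. -/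
open Filter Topology

/-- The inclusion `ι : 𝒬 → ℝ²`, valued in the Euclidean plane
(with the Euclidean norm). -/
noncomputable def combιE (x : Comb) : EuclideanSpace ℝ (Fin 2) :=
  WithLp.toLp 2 ![x.pt.1, x.pt.2]

/-- `f(u) = (e^u − 1)/(e^u + 1)`. -/
noncomputable def fdir (u : ℝ) : ℝ := (Real.exp u - 1) / (Real.exp u + 1)

open Classical in
/-- The direction datum `dir_y(x) ∈ ℝ²` from `x` towards `y`:
`dir_y(x) = f(d(x,y)) · (ι(y) − ι(x))/‖ι(y) − ι(x)‖` for `y ≠ x` (Euclidean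
norm), and `dir_x(x) = 0`. -/
noncomputable def dirTo (y x : Comb) : EuclideanSpace ℝ (Fin 2) :=
  if y = x then 0
  else fdir (dist x y) • ‖combιE y - combιE x‖⁻¹ • (combιE y - combιE x)

/-!
The `z`-th coordinate of `Ψ w` remembers `d(z, w)`: the direction datum `dir_w(z)` has norm
`f(d(z, w))`, and `f` is a strictly increasing continuous function with `f 0 = 0`. Hence `Ψ` is
injective, and `Ψ w → Ψ z` forces `f(d(z, w)) → 0`, i.e. `w → z`. Continuity of `Ψ` is
coordinatewise; the only delicate point is `dir_w(x) → 0` as `w → x`, which again follows from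
`‖dir_w(x)‖ = f(d(x, w))`.
-/

theorem Metric.isEmbedding_of_continuous_comp_eq_dist {X Y : Type*} [MetricSpace X]
    [TopologicalSpace Y] {F : X → Y} (hF : Continuous F) {φ : ℝ → ℝ} (hφ : StrictMono φ)
    (g : X → Y → ℝ) (hg : ∀ z, Continuous (g z)) (hgF : ∀ z w, g z (F w) = φ (dist z w)) :
    IsEmbedding F := by
  refine ⟨isInducing_iff_nhds.2 fun z => le_antisymm (hF.tendsto z).le_comap ?_, ?_⟩
  · intro s hs
    obtain ⟨ε, hε, hball⟩ := Metric.mem_nhds_iff.1 hs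
    refine mem_comap.2 ⟨{y | g z y < φ ε}, ?_, fun w hw => hball ?_⟩
    · refine (isOpen_lt (hg z) continuous_const).mem_nhds ?_
      simpa only [Set.mem_ofPred_eq, hgF, dist_self] using hφ hε
    · have hw : φ (dist z w) < φ ε := hgF z w ▸ hw
      rw [Metric.mem_ball, dist_comm]
      exact hφ.lt_iff_lt.1 hw
  · intro z w h
    have hzw : φ (dist w z) = φ (dist w w) := by rw [← hgF, ← hgF, h]
    exact (dist_eq_zero.1 (dist_self w ▸ hφ.injective hzw)).symm

lemma fdir_eq_one_sub (u : ℝ) : fdir u = 1 - 2 / (Real.exp u + 1) := by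
  rw [fdir]
  field_simp
  ring

lemma fdir_strictMono : StrictMono fdir := by
  intro a b hab
  have hexp : Real.exp a + 1 < Real.exp b + 1 := by gcongr
  rw [fdir_eq_one_sub, fdir_eq_one_sub]
  gcongr

lemma fdir_zero : fdir 0 = 0 := by simp [fdir]

lemma fdir_nonneg {u : ℝ} (hu : 0 ≤ u) : 0 ≤ fdir u :=
  fdir_zero ▸ fdir_strictMono.monotone hu

lemma continuous_fdir : Continuous fdir :=
  (Real.continuous_exp.sub continuous_const).div (Real.continuous_exp.add continuous_const)
    fun u => by positivity

namespace Comb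

lemma dist_eq (x y : Comb) : dist x y = combDist x y := rfl

lemma abs_pt_fst_sub_le_dist (x y : Comb) : |x.pt.1 - y.pt.1| ≤ dist x y := by
  rw [dist_eq, combDist]
  split_ifs with h
  · simp [h]
  · linarith [abs_nonneg x.pt.2, abs_nonneg y.pt.2]

lemma abs_pt_snd_sub_le_dist (x y : Comb) : |x.pt.2 - y.pt.2| ≤ dist x y := by
  rw [dist_eq, combDist]
  split_ifs with h
  · exact le_rfl
  · linarith [abs_sub x.pt.2 y.pt.2, abs_nonneg (x.pt.1 - y.pt.1)]

lemma continuous_pt_fst : Continuous fun z : Comb => z.pt.1 :=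
  LipschitzWith.continuous (K := 1) <| LipschitzWith.of_dist_le_mul fun x y => by
    simpa [Real.dist_eq] using abs_pt_fst_sub_le_dist x y

lemma continuous_pt_snd : Continuous fun z : Comb => z.pt.2 :=
  LipschitzWith.continuous (K := 1) <| LipschitzWith.of_dist_le_mul fun x y => by
    simpa [Real.dist_eq] using abs_pt_snd_sub_le_dist x y

end Comb

lemma combιE_injective : Function.Injective combιE := by
  intro x y h
  have h0 := congrArg (· 0) h
  have h1 := congrArg (· 1) h
  simp only [combιE, PiLp.toLp_apply, Matrix.cons_val_zero, Matrix.cons_val_one] at h0 h1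
  exact Comb.ext (Prod.ext h0 h1)

lemma continuous_combιE : Continuous combιE := by
  refine (PiLp.continuous_toLp 2 _).comp (continuous_pi fun i => ?_)
  fin_cases i
  · exact Comb.continuous_pt_fst
  · exact Comb.continuous_pt_snd

lemma dirTo_self (x : Comb) : dirTo x x = 0 := if_pos rfl

lemma dirTo_of_ne {y x : Comb} (h : y ≠ x) :
    dirTo y x = fdir (dist x y) • ‖combιE y - combιE x‖⁻¹ • (combιE y - combιE x) :=
  if_neg h

lemma norm_dirTo (y x : Comb) : ‖dirTo y x‖ = fdir (dist x y) := by
  rcases eq_or_ne y x with rfl | h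
  · simp [dirTo_self, fdir_zero]
  · have hv : ‖combιE y - combιE x‖ ≠ 0 :=
      norm_ne_zero_iff.2 (sub_ne_zero.2 (combιE_injective.ne h))
    rw [dirTo_of_ne h, norm_smul, norm_smul, norm_inv, norm_norm, Real.norm_eq_abs,
      abs_of_nonneg (fdir_nonneg dist_nonneg), inv_mul_cancel₀ hv, mul_one]

lemma continuous_dirTo_left (x : Comb) : Continuous fun z : Comb => dirTo z x := by
  have hfd : Continuous fun z : Comb => fdir (dist x z) :=
    continuous_fdir.comp (continuous_const.dist continuous_id)
  refine continuous_iff_continuousAt.2 fun z => ?_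
  rcases eq_or_ne z x with rfl | hz
  · rw [ContinuousAt, dirTo_self, tendsto_zero_iff_norm_tendsto_zero]
    simpa only [norm_dirTo, dist_self, fdir_zero] using hfd.tendsto z
  · have hv : Continuous fun w : Comb => combιE w - combιE x :=
      continuous_combιE.sub continuous_const
    have hvz : ‖combιE z - combιE x‖ ≠ 0 :=
      norm_ne_zero_iff.2 (sub_ne_zero.2 (combιE_injective.ne hz))
    rw [continuousAt_congr (eventually_of_mem (isOpen_ne.mem_nhds hz)
      fun w hw => dirTo_of_ne hw)]
    exact hfd.continuousAt.smul ((hv.norm.continuousAt.inv₀ hvz).smul hv.continuousAt)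

lemma continuous_horo_left {X : Type*} [MetricSpace X] (b x : X) :
    Continuous fun z : X => horo b z x :=
  (continuous_const.dist continuous_id).sub (continuous_const.dist continuous_id)

/-- The map `Ψ : 𝒬 → Π_{x ∈ 𝒬} (ℝ × ℝ²)`, `Ψ(z) = (ψ_z(x), dir_z(x))_{x∈𝒬}`,
into the product space with the product topology, is a homeomorphism onto its
image (i.e. a topological embedding). -/
theorem stmt8 :
    Topology.IsEmbedding
      (fun z : Comb => fun x : Comb =>
        ((horo combBase z x, dirTo z x) : ℝ × EuclideanSpace ℝ (Fin 2))) := by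
  exact Metric.isEmbedding_of_continuous_comp_eq_dist
    (continuous_pi fun x => (continuous_horo_left combBase x).prodMk (continuous_dirTo_left x))
    fdir_strictMono (fun z Φ => ‖(Φ z).2‖) (fun z => ((continuous_apply z).snd).norm)
    fun z w => norm_dirTo w z
end
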